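/- Let (X, Y, I, J) be an ADHM datum with framing rank 1 (W = ℂ) which is a fixed point of the one-parameter torus a·(X,Y,I,J) = (aX, a⁻¹Y, I, J), so that V = ⊕_{i=0}^{M−1} ℂ·e_i with e_i of weight i, X e_i = λ_i e_{i−1}, Y e_i = μ_i e_{i+1}, and I, J connect W to ℂ·e₀ only. Assume stability ℂ⟨X,Y⟩ Im(I) = V, which forces μ_i ≠ 0 for 0 ≤ i ≤ M−2, and the equation [X,Y] + IJ = 0. Then λ_i = 0 for all i. -/

import Mathlib

/-- for a torus-fixed ADHM datum with framing rank 1, with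
`X e_i = λ_i e_{i-1}`, `Y e_i = μ_i e_{i+1}`, stability forcing `μ_i ≠ 0` for
`i ≤ M - 2`, the relation `λ_i μ_{i-1} = λ_{i+1} μ_i` for `1 ≤ i ≤ M - 1`
(coming from `[X,Y] + IJ = 0`), and `λ_M = 0`, all the `λ_i` vanish. -/
theorem stmt4 (M : ℕ) (lam mu : ℕ → ℂ)
    (hmu : ∀ i, i + 2 ≤ M → mu i ≠ 0)
    (hrel : ∀ i, 1 ≤ i → i ≤ M - 1 → lam i * mu (i - 1) = lam (i + 1) * mu i)
    (hlamM : lam M = 0) :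
    ∀ i, 1 ≤ i → i ≤ M → lam i = 0 := by
  intro i hi hiM
  induction hiM using Nat.decreasingInduction with
  | self => exact hlamM
  | of_succ k hkM ih =>
    have hprod : lam k * mu (k - 1) = 0 := by
      rw [hrel k hi (by omega), ih (by omega), zero_mul]
    exact (mul_eq_zero.mp hprod).resolve_right (hmu (k - 1) (by omega))
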